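/- On ℝ² × ℝ, let d_K(x,y) = (‖x₁−y₁‖⁴ + (x₂ − y₂ − 2ω(x₁,y₁))²)^{1/4} be the Koranyi distance, where ‖·‖ is the Euclidean norm on ℝ² and ω((a,b),(c,d)) = ad − bc. Define B = {(x₁,x₂) : ‖x₁‖⁴ + x₂² ≤ 1} (the closed Koranyi unit ball centered at the identity) and G = {(x₁,x₂) : ‖x₁‖ ≤ 1 and x₂² ≤ 2·(1 − ‖x₁‖⁴)}. Then B ⊆ G, B ≠ G, and d_K(p,q) ≤ 2 for all p, q ∈ G (i.e., G has Koranyi diameter at most 2). -/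

import Mathlib

/-- The standard symplectic form `ω((a,b),(c,d)) = ad - bc` on `ℝ²`. -/
noncomputable def heisOmega (a b : ℝ × ℝ) : ℝ := a.1 * b.2 - a.2 * b.1

/-- The Euclidean norm on `ℝ²`. -/
noncomputable def enorm2 (a : ℝ × ℝ) : ℝ := Real.sqrt (a.1 ^ 2 + a.2 ^ 2)

/-- The Koranyi distance on the first Heisenberg group `ℝ² × ℝ`. -/
noncomputable def dKoranyi (p q : (ℝ × ℝ) × ℝ) : ℝ :=
  (enorm2 (p.1 - q.1) ^ 4 + (p.2 - q.2 - 2 * heisOmega p.1 q.1) ^ 2) ^ ((1 : ℝ) / 4)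

private lemma sq_le_of_sq (a b : ℝ) (ha : 0 ≤ a) (hb : 0 ≤ b) (h : a ^ 2 ≤ b ^ 2) :
    a ≤ b := by nlinarith [sq_nonneg (a - b), sq_nonneg (a + b)]

set_option maxHeartbeats 1000000 in
private lemma key_ineq (u v c w σ τ : ℝ) (hu0 : 0 ≤ u) (hu1 : u ≤ 1) (hv0 : 0 ≤ v)
    (hv1 : v ≤ 1) (hσ : 0 ≤ σ) (hτ : 0 ≤ τ) (hw : 0 ≤ w)
    (hσ2 : σ ^ 2 ≤ 2 * (1 - u ^ 2)) (hτ2 : τ ^ 2 ≤ 2 * (1 - v ^ 2))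
    (hwc : w ^ 2 + c ^ 2 = u * v) :
    (u + v - 2 * c) ^ 2 + (σ + τ + 2 * w) ^ 2 ≤ 16 := by
  set m := Real.sqrt (u * v) with hm
  have hm0 : 0 ≤ m := Real.sqrt_nonneg _
  have hm2 : m ^ 2 = u * v := Real.sq_sqrt (mul_nonneg hu0 hv0)
  have hm1 : m ≤ 1 := by nlinarith
  -- στ ≤ 2(1 - uv)
  have hστ : σ * τ ≤ 2 * (1 - u * v) := by
    apply sq_le_of_sq _ _ (mul_nonneg hσ hτ) (by nlinarith)
    calc (σ * τ) ^ 2 = σ ^ 2 * τ ^ 2 := by ring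
      _ ≤ (2 * (1 - u ^ 2)) * (2 * (1 - v ^ 2)) := by
          apply mul_le_mul hσ2 hτ2 (sq_nonneg _) (by nlinarith)
      _ ≤ (2 * (1 - u * v)) ^ 2 := by nlinarith [sq_nonneg (u - v)]
  -- (u+v)² + (σ+τ)² ≤ (4 - 2m)²
  have hS : (u + v) ^ 2 + (σ + τ) ^ 2 ≤ (4 - 2 * m) ^ 2 := by
    nlinarith [sq_nonneg (1 - m), sq_nonneg (u - v)]
  -- Cauchy–Schwarz step
  have hrhs0 : 0 ≤ m * (4 - 2 * m) := by nlinarith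
  have hCS : w * (σ + τ) - c * (u + v) ≤ m * (4 - 2 * m) := by
    rcases le_or_gt (w * (σ + τ) - c * (u + v)) 0 with hneg | hpos
    · linarith
    apply sq_le_of_sq _ _ hpos.le hrhs0
    calc (w * (σ + τ) - c * (u + v)) ^ 2
          ≤ (w ^ 2 + c ^ 2) * ((σ + τ) ^ 2 + (u + v) ^ 2) := by
            nlinarith [sq_nonneg (w * (u + v) + c * (σ + τ))]
        _ = m ^ 2 * ((u + v) ^ 2 + (σ + τ) ^ 2) := by rw [hm2, hwc]; ring
        _ ≤ m ^ 2 * (4 - 2 * m) ^ 2 := by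
            apply mul_le_mul_of_nonneg_left hS (sq_nonneg _)
        _ = (m * (4 - 2 * m)) ^ 2 := by ring
  nlinarith [hS, hCS, hm2]

set_option maxHeartbeats 800000 in
/-- In the first Heisenberg group with the Koranyi distance, the
set `G = {(x₁,x₂) : ‖x₁‖ ≤ 1 and x₂² ≤ 2(1 - ‖x₁‖⁴)}` strictly contains the closed
Koranyi unit ball `B = {(x₁,x₂) : ‖x₁‖⁴ + x₂² ≤ 1}` and has Koranyi diameter at
most `2`. -/
theorem statement_17 :
    {x : (ℝ × ℝ) × ℝ | enorm2 x.1 ^ 4 + x.2 ^ 2 ≤ 1} ⊆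
      {x : (ℝ × ℝ) × ℝ | enorm2 x.1 ≤ 1 ∧ x.2 ^ 2 ≤ 2 * (1 - enorm2 x.1 ^ 4)} ∧
    {x : (ℝ × ℝ) × ℝ | enorm2 x.1 ^ 4 + x.2 ^ 2 ≤ 1} ≠
      {x : (ℝ × ℝ) × ℝ | enorm2 x.1 ≤ 1 ∧ x.2 ^ 2 ≤ 2 * (1 - enorm2 x.1 ^ 4)} ∧
    ∀ p ∈ {x : (ℝ × ℝ) × ℝ | enorm2 x.1 ≤ 1 ∧ x.2 ^ 2 ≤ 2 * (1 - enorm2 x.1 ^ 4)},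
      ∀ q ∈ {x : (ℝ × ℝ) × ℝ | enorm2 x.1 ≤ 1 ∧ x.2 ^ 2 ≤ 2 * (1 - enorm2 x.1 ^ 4)},
        dKoranyi p q ≤ 2 := by
  refine ⟨?_, ?_, ?_⟩
  · -- inclusion
    intro x hx
    simp only [Set.mem_setOf_eq] at hx ⊢
    have hn0 : 0 ≤ enorm2 x.1 := Real.sqrt_nonneg _
    constructor
    · nlinarith [sq_nonneg (x.2), sq_nonneg (enorm2 x.1 ^ 2 + 1), sq_nonneg (enorm2 x.1 - 1),
        sq_nonneg (enorm2 x.1 + 1)]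
    · nlinarith [sq_nonneg (x.2)]
  · -- the sets differ: ((0,0), √2) is in G but not in B
    intro h
    have hmem : (((0, 0), Real.sqrt 2) : (ℝ × ℝ) × ℝ) ∈
        {x : (ℝ × ℝ) × ℝ | enorm2 x.1 ≤ 1 ∧ x.2 ^ 2 ≤ 2 * (1 - enorm2 x.1 ^ 4)} := by
      simp only [Set.mem_setOf_eq, enorm2]
      norm_num [Real.sq_sqrt]
    rw [← h] at hmem
    simp only [Set.mem_setOf_eq, enorm2] at hmem
    rw [Real.sq_sqrt (by norm_num : (0:ℝ) ≤ 2)] at hmem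
    norm_num at hmem
  · -- diameter bound
    rintro ⟨⟨x1, x2⟩, s⟩ ⟨hp1, hp2⟩ ⟨⟨y1, y2⟩, t⟩ ⟨hq1, hq2⟩
    simp only [Set.mem_setOf_eq, enorm2] at hp1 hp2 hq1 hq2
    set u : ℝ := x1 ^ 2 + x2 ^ 2 with hu
    set v : ℝ := y1 ^ 2 + y2 ^ 2 with hv
    have hu0 : 0 ≤ u := by positivity
    have hv0 : 0 ≤ v := by positivity
    have hsu : Real.sqrt u ^ 2 = u := Real.sq_sqrt hu0
    have hsv : Real.sqrt v ^ 2 = v := Real.sq_sqrt hv0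
    have hsu4 : Real.sqrt u ^ 4 = u ^ 2 := by
      rw [show (4:ℕ) = 2 * 2 from rfl, pow_mul, hsu]
    have hsv4 : Real.sqrt v ^ 4 = v ^ 2 := by
      rw [show (4:ℕ) = 2 * 2 from rfl, pow_mul, hsv]
    have hu1 : u ≤ 1 := by nlinarith [Real.sqrt_nonneg u]
    have hv1 : v ≤ 1 := by nlinarith [Real.sqrt_nonneg v]
    have hs2 : s ^ 2 ≤ 2 * (1 - u ^ 2) := by rw [← hsu4]; exact hp2
    have ht2 : t ^ 2 ≤ 2 * (1 - v ^ 2) := by rw [← hsv4]; exact hq2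
    -- unfold the distance
    show (enorm2 ((x1, x2) - (y1, y2)) ^ 4 +
        (s - t - 2 * heisOmega (x1, x2) (y1, y2)) ^ 2) ^ ((1:ℝ)/4) ≤ 2
    have hD0 : (0:ℝ) ≤ (x1 - y1) ^ 2 + (x2 - y2) ^ 2 := by positivity
    have hE : enorm2 ((x1, x2) - (y1, y2)) ^ 4 = ((x1 - y1) ^ 2 + (x2 - y2) ^ 2) ^ 2 := by
      simp only [enorm2, Prod.mk_sub_mk]
      rw [show (4:ℕ) = 2 * 2 from rfl, pow_mul, Real.sq_sqrt hD0]
    rw [hE]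
    -- main polynomial bound
    have hmain : ((x1 - y1) ^ 2 + (x2 - y2) ^ 2) ^ 2 +
        (s - t - 2 * heisOmega (x1, x2) (y1, y2)) ^ 2 ≤ 16 := by
      set c : ℝ := x1 * y1 + x2 * y2 with hc
      set ω : ℝ := x1 * y2 - x2 * y1 with hω
      have hDe : (x1 - y1) ^ 2 + (x2 - y2) ^ 2 = u + v - 2 * c := by
        simp only [hu, hv, hc]; ring
      have hωc : |ω| ^ 2 + c ^ 2 = u * v := by
        rw [sq_abs]; simp only [hω, hc, hu, hv]; ring
      have hkey := key_ineq u v c |ω| |s| |t| hu0 hu1 hv0 hv1 (abs_nonneg s)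
        (abs_nonneg t) (abs_nonneg ω) (by rw [sq_abs]; exact hs2)
        (by rw [sq_abs]; exact ht2) hωc
      have hV : (s - t - 2 * heisOmega (x1, x2) (y1, y2)) ^ 2 ≤ (|s| + |t| + 2 * |ω|) ^ 2 := by
        have h1 : |s - t - 2 * heisOmega (x1, x2) (y1, y2)| ≤ |s| + |t| + 2 * |ω| := by
          have : heisOmega (x1, x2) (y1, y2) = ω := rfl
          rw [this]
          calc |s - t - 2 * ω| ≤ |s - t| + |2 * ω| := abs_sub _ _
            _ ≤ (|s| + |t|) + 2 * |ω| := by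
                rw [abs_mul, abs_two]; exact add_le_add (abs_sub s t) le_rfl
            _ = |s| + |t| + 2 * |ω| := by ring
        calc (s - t - 2 * heisOmega (x1, x2) (y1, y2)) ^ 2
            = |s - t - 2 * heisOmega (x1, x2) (y1, y2)| ^ 2 := (sq_abs _).symm
          _ ≤ (|s| + |t| + 2 * |ω|) ^ 2 := by
              apply pow_le_pow_left₀ (abs_nonneg _) h1 2
      rw [hDe]
      linarith [hkey, hV]
    have h16 : ((16:ℝ)) ^ ((1:ℝ)/4) = 2 := by
      rw [show (16:ℝ) = 2 ^ (4:ℕ) by norm_num, ← Real.rpow_natCast 2 4,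
        ← Real.rpow_mul (by norm_num)]
      norm_num
    calc (((x1 - y1) ^ 2 + (x2 - y2) ^ 2) ^ 2 +
        (s - t - 2 * heisOmega (x1, x2) (y1, y2)) ^ 2) ^ ((1:ℝ)/4)
        ≤ (16:ℝ) ^ ((1:ℝ)/4) := by
          apply Real.rpow_le_rpow (by positivity) hmain (by norm_num)
      _ = 2 := h16
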